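/- arXiv:1308.5585 — 2 statements merged into one kernel-verified Lean document; each statement's English description precedes it below -/
import Mathlib

section
/- For tree patterns interpreted over labeled trees, the existence of a containment mapping from p into q implies semantic containment q ⊑ p: every match of q in any tree yields a match of p with the same output node. -/
/-- A tree pattern: nodes labeled in `σ`, child (/) and descendant (//) edges,
a distinguished root and output node. -/
structure TreePattern (σ : Type) where
  Node : Type
  root : Node
  out : Node
  label : Node → σ
  child : Node → Node → Prop
  desc : Node → Node → Prop

/-- An edge of either kind. -/
def TreePattern.edge {σ : Type} (p : TreePattern σ) (a b : p.Node) : Prop :=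
  p.child a b ∨ p.desc a b

/-- A path of length ≥ 1 inside a pattern. -/
def TreePattern.reach {σ : Type} (p : TreePattern σ) : p.Node → p.Node → Prop :=
  Relation.TransGen p.edge

/-- A containment mapping from pattern `p` into pattern `q`. -/
structure IsContainmentMapping {σ : Type} (p q : TreePattern σ)
    (h : p.Node → q.Node) : Prop where
  root : h p.root = q.root
  out : h p.out = q.out
  label : ∀ x, q.label (h x) = p.label x
  child : ∀ a b, p.child a b → q.child (h a) (h b)
  desc : ∀ a b, p.desc a b → q.reach (h a) (h b)

/-- A labeled tree. -/
structure LTree (σ : Type) where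
  Node : Type
  root : Node
  label : Node → σ
  child : Node → Node → Prop

/-- Proper ancestor-descendant relation in a tree. -/
def LTree.desc {σ : Type} (t : LTree σ) : t.Node → t.Node → Prop :=
  Relation.TransGen t.child

/-- An embedding of a tree pattern into a labeled tree. -/
structure IsEmbedding {σ : Type} (p : TreePattern σ) (t : LTree σ)
    (e : p.Node → t.Node) : Prop where
  root : e p.root = t.root
  label : ∀ x, t.label (e x) = p.label x
  child : ∀ a b, p.child a b → t.child (e a) (e b)
  desc : ∀ a b, p.desc a b → t.desc (e a) (e b)

/-- The answers of pattern `p` on tree `t`: images of the output node under embeddings. -/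
def answers {σ : Type} (p : TreePattern σ) (t : LTree σ) : Set t.Node :=
  {x | ∃ e, IsEmbedding p t e ∧ e p.out = x}

/-- Semantic containment `q ⊑ p`: every answer of `q` is an answer of `p`, on all trees. -/
def contained {σ : Type} (q p : TreePattern σ) : Prop :=
  ∀ t : LTree σ, answers q t ⊆ answers p t

namespace IsEmbedding

variable {σ : Type} {p q : TreePattern σ} {t : LTree σ} {e : q.Node → t.Node}

theorem edge_imp_desc (he : IsEmbedding q t e) {a b : q.Node} (hab : q.edge a b) :
    t.desc (e a) (e b) :=
  hab.elim (fun hc => .single (he.child a b hc)) (he.desc a b)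

theorem reach_imp_desc (he : IsEmbedding q t e) {a b : q.Node} (hab : q.reach a b) :
    t.desc (e a) (e b) :=
  Relation.TransGen.lift' e (fun _ _ => he.edge_imp_desc) _ _ hab

theorem comp_containmentMapping (he : IsEmbedding q t e) {h : p.Node → q.Node}
    (hcm : IsContainmentMapping p q h) : IsEmbedding p t (e ∘ h) where
  root := (congrArg e hcm.root).trans he.root
  label x := (he.label (h x)).trans (hcm.label x)
  child a b hab := he.child _ _ (hcm.child a b hab)
  desc a b hab := he.reach_imp_desc (hcm.desc a b hab)

end IsEmbedding

/-- If there is a containment mapping from pattern `p` into pattern `q`, then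
`q ⊑ p` semantically: every answer of `q` on any tree is an answer of `p`. -/
theorem containmentMapping_implies_contained {σ : Type} (p q : TreePattern σ)
    (h : p.Node → q.Node) (hcm : IsContainmentMapping p q h) :
    contained q p := by
  rintro t _ ⟨e, he, rfl⟩
  exact ⟨e ∘ h, he.comp_containmentMapping hcm, congrArg e hcm.out⟩
end

section
/- Compensation preserves containment: if tree pattern r satisfies q ⊑ r (there is a containment mapping from r into q mapping output to a node n of q), then appending to r's output node a copy of the subtree of q rooted below n yields a pattern r' with q ⊑ r' where the containment mapping sends r''s output to q's output. -/
/-- A root-mapping from `r` into `q` that is a containment mapping except that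
the output of `r` is sent to the node `n` of `q` (witnessing `q ⊑ r` at `n`). -/
structure IsMappingTo {σ : Type} (r q : TreePattern σ) (h : r.Node → q.Node)
    (n : q.Node) : Prop where
  root : h r.root = q.root
  out : h r.out = n
  label : ∀ x, q.label (h x) = r.label x
  child : ∀ a b, r.child a b → q.child (h a) (h b)
  desc : ∀ a b, r.desc a b → q.reach (h a) (h b)

/-- The pattern `r'` obtained from `r` by grafting at its output node a fresh
copy of the subtree of `q` strictly below `n` (with the same edge types), moving
the output designation to the copy of `q`'s output node. -/
def compensate {σ : Type} (r q : TreePattern σ) (n : q.Node)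
    (ho : q.reach n q.out) : TreePattern σ where
  Node := r.Node ⊕ {x : q.Node // q.reach n x}
  root := Sum.inl r.root
  out := Sum.inr ⟨q.out, ho⟩
  label := fun x => match x with
    | .inl a => r.label a
    | .inr a => q.label a.1
  child := fun x y => match x, y with
    | .inl a, .inl b => r.child a b
    | .inl a, .inr b => a = r.out ∧ q.child n b.1
    | .inr a, .inr b => q.child a.1 b.1
    | .inr _, .inl _ => False
  desc := fun x y => match x, y with
    | .inl a, .inl b => r.desc a b
    | .inl a, .inr b => a = r.out ∧ q.desc n b.1
    | .inr a, .inr b => q.desc a.1 b.1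
    | .inr _, .inl _ => False

theorem TreePattern.reach_of_desc {σ : Type} {p : TreePattern σ} {a b : p.Node}
    (hab : p.desc a b) : p.reach a b :=
  .single (Or.inr hab)

/- The mapping sends `r` along `h` and every grafted copy back to its original in `q`;
an edge leaving `r.out` towards the graft starts at `h r.out = n` in `q`, so it is
the very edge of `q` it was copied from. -/

theorem IsMappingTo.isContainmentMapping_compensate {σ : Type} {r q : TreePattern σ}
    {h : r.Node → q.Node} {n : q.Node} (hm : IsMappingTo r q h n) (ho : q.reach n q.out) :
    IsContainmentMapping (compensate r q n ho) q (Sum.elim h Subtype.val) where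
  root := hm.root
  out := rfl
  label
    | .inl x => hm.label x
    | .inr _ => rfl
  child
    | .inl a, .inl b, hab => hm.child a b hab
    | .inl _, .inr _, ⟨rfl, hnb⟩ => by rw [Sum.elim_inl, hm.out]; exact hnb
    | .inr _, .inr _, hab => hab
  desc
    | .inl a, .inl b, hab => hm.desc a b hab
    | .inl _, .inr _, ⟨rfl, hnb⟩ => by rw [Sum.elim_inl, hm.out]; exact TreePattern.reach_of_desc hnb
    | .inr _, .inr _, hab => TreePattern.reach_of_desc hab

/-- Compensation preserves containment: if there is a containment mapping from
`r` into `q` sending the output of `r` to a node `n` of `q` (with `q`'s output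
below `n`), then grafting the subtree of `q` below `n` onto `r`'s output yields a
pattern `r'` with a containment mapping from `r'` into `q` sending output to
output (hence `q ⊑ r'`). -/
theorem compensate_contained {σ : Type} (r q : TreePattern σ)
    (h : r.Node → q.Node) (n : q.Node) (hm : IsMappingTo r q h n)
    (ho : q.reach n q.out) :
    ∃ h' : (compensate r q n ho).Node → q.Node,
      IsContainmentMapping (compensate r q n ho) q h' :=
  ⟨_, hm.isContainmentMapping_compensate ho⟩
end
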